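/- arXiv:0910.0880 — 7 statements merged into one kernel-verified Lean document; each statement's English description precedes it below -/
import Mathlib

section
/- Let v : ℝ → ℝ be strictly monotone increasing, let s > 0, let λ₁ ∈ ℝ and λ₂ ≥ 0, and let a : [0,∞) → [0,s] be a function satisfying, for every p ≥ 0: if 0 < a(p) < s then v(a(p)/s) = λ₁ − λ₂ p; if a(p) = 0 then v(0) ≥ λ₁ − λ₂ p; and if a(p) = s then v(1) ≤ λ₁ − λ₂ p. Then a is antitone (non-increasing) on [0,∞). -/
/-- If `v = u'` is strictly increasing and an allocation
`a : [0,∞) → [0,s]` satisfies the Euler–Lagrange/KKT optimality conditions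
`v(a(p)/s) = λ₁ − λ₂ p` where the bounds are inactive (with the one-sided
inequalities where a bound is active), with `λ₂ ≥ 0`, then `a` is antitone. -/
theorem optimality_conditions_imply_antitone
    (v : ℝ → ℝ) (hv : StrictMono v)
    (s : ℝ) (hs : 0 < s)
    (lam₁ lam₂ : ℝ) (hlam₂ : 0 ≤ lam₂)
    (a : ℝ → ℝ)
    (hbd : ∀ p, 0 ≤ p → a p ∈ Set.Icc 0 s)
    (hinterior : ∀ p, 0 ≤ p → 0 < a p → a p < s → v (a p / s) = lam₁ - lam₂ * p)
    (hlo : ∀ p, 0 ≤ p → a p = 0 → lam₁ - lam₂ * p ≤ v 0)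
    (hhi : ∀ p, 0 ≤ p → a p = s → v 1 ≤ lam₁ - lam₂ * p) :
    ∀ p₁ p₂, 0 ≤ p₁ → p₁ ≤ p₂ → a p₂ ≤ a p₁ := by
  intro p₁ p₂ hp₁ hp
  by_contra hcon
  push_neg at hcon
  have hp₂ : 0 ≤ p₂ := le_trans hp₁ hp
  obtain ⟨h10, h1s⟩ := hbd p₁ hp₁
  obtain ⟨h20, h2s⟩ := hbd p₂ hp₂
  have hx : a p₁ < s := lt_of_lt_of_le hcon h2s
  have hy : 0 < a p₂ := lt_of_le_of_lt h10 hcon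
  -- v (a p₂ / s) ≤ lam₁ - lam₂ * p₂
  have H2 : v (a p₂ / s) ≤ lam₁ - lam₂ * p₂ := by
    rcases lt_or_eq_of_le h2s with h | h
    · exact le_of_eq (hinterior p₂ hp₂ hy h)
    · rw [h, div_self hs.ne']; exact hhi p₂ hp₂ h
  -- lam₁ - lam₂ * p₁ ≤ v (a p₁ / s)
  have H1 : lam₁ - lam₂ * p₁ ≤ v (a p₁ / s) := by
    rcases lt_or_eq_of_le h10 with h | h
    · exact le_of_eq (hinterior p₁ hp₁ h hx).symm
    · rw [← h, zero_div]; exact hlo p₁ hp₁ h.symm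
  have hmono : v (a p₁ / s) < v (a p₂ / s) := hv ((div_lt_div_iff_of_pos_right hs).mpr hcon)
  have : lam₂ * p₁ ≤ lam₂ * p₂ := mul_le_mul_of_nonneg_left hp hlam₂
  linarith
end

section
/- Let f : [0,∞) → [0,∞) be a probability density on [0,∞), let s > 0, d > 0, t > 0, z > 0, and p_max > 0. Define a*(p) = s·min(1, max(0, z·(p_max − p))) for p ≥ 0, and assume ∫ a*(p) f(p) dp = d and ∫ p·a*(p) f(p) dp = t·d. Then for every measurable a : [0,∞) → [0,s] with ∫ a(p) f(p) dp = d and ∫ p·a(p) f(p) dp ≤ t·d, one has ∫ (a(p) − d)² f(p) dp ≥ ∫ (a*(p) − d)² f(p) dp (assuming all displayed integrals are finite). -/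
open MeasureTheory

/-- Optimality of the clamped-linear allocation
`a*(p) = s·min(1, max(0, z(p_max − p)))` for the maximally representative
allocation problem with L₂ distance, when the demand and spend constraints hold
with equality for `a*`. -/
theorem l2_optimal_allocation
    (f : ℝ → ℝ) (hf_nonneg : ∀ p, 0 ≤ f p) (hf_meas : Measurable f)
    (hf_prob : ∫ p in Set.Ici (0 : ℝ), f p = 1)
    (s d t z pmax : ℝ) (hs : 0 < s) (hd : 0 < d) (ht : 0 < t)
    (hz : 0 < z) (hpmax : 0 < pmax)
    (astar : ℝ → ℝ)
    (hastar : ∀ p, astar p = s * min 1 (max 0 (z * (pmax - p))))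
    (hastar_dem : ∫ p in Set.Ici (0 : ℝ), astar p * f p = d)
    (hastar_spend : ∫ p in Set.Ici (0 : ℝ), p * astar p * f p = t * d)
    (hastar_obj_int : IntegrableOn (fun p => (astar p - d) ^ 2 * f p) (Set.Ici 0))
    (hastar_int : IntegrableOn (fun p => astar p * f p) (Set.Ici 0))
    (hastar_spend_int : IntegrableOn (fun p => p * astar p * f p) (Set.Ici 0)) :
    ∀ a : ℝ → ℝ, Measurable a → (∀ p, 0 ≤ p → a p ∈ Set.Icc 0 s) →
      (∫ p in Set.Ici (0 : ℝ), a p * f p = d) →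
      (∫ p in Set.Ici (0 : ℝ), p * a p * f p ≤ t * d) →
      IntegrableOn (fun p => a p * f p) (Set.Ici 0) →
      IntegrableOn (fun p => p * a p * f p) (Set.Ici 0) →
      IntegrableOn (fun p => (a p - d) ^ 2 * f p) (Set.Ici 0) →
      (∫ p in Set.Ici (0 : ℝ), (astar p - d) ^ 2 * f p) ≤
        ∫ p in Set.Ici (0 : ℝ), (a p - d) ^ 2 * f p := by
  intro a ha_meas ha_range ha_dem ha_spend ha_int ha_spend_int ha_obj_int
  set M : ℝ := 2 * d - 2 * s * z * pmax with hM
  set L : ℝ := 2 * s * z with hL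
  have hL0 : 0 ≤ L := by rw [hL]; positivity
  have hIS : IntegrableOn (fun p => astar p * f p - a p * f p) (Set.Ici 0) :=
    hastar_int.sub ha_int
  have hIS' : IntegrableOn (fun p => p * astar p * f p - p * a p * f p) (Set.Ici 0) :=
    hastar_spend_int.sub ha_spend_int
  have hIM : IntegrableOn (fun p => M * (astar p * f p - a p * f p)) (Set.Ici 0) :=
    hIS.const_mul M
  have hIL : IntegrableOn (fun p => L * (p * astar p * f p - p * a p * f p)) (Set.Ici 0) :=
    hIS'.const_mul L
  set h : ℝ → ℝ := fun p => (astar p - d) ^ 2 * f p +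
      (M * (astar p * f p - a p * f p) + L * (p * astar p * f p - p * a p * f p)) with hh
  have hInt2 : IntegrableOn (fun p => M * (astar p * f p - a p * f p) +
      L * (p * astar p * f p - p * a p * f p)) (Set.Ici 0) := hIM.add hIL
  have hInt : IntegrableOn h (Set.Ici 0) := hastar_obj_int.add hInt2
  have hpt : ∀ p ∈ Set.Ici (0 : ℝ), h p ≤ (a p - d) ^ 2 * f p := by
    intro p hp
    obtain ⟨h0, hs'⟩ := ha_range p hp
    have hb : (astar p - d) ^ 2 + (M + L * p) * (astar p - a p) ≤ (a p - d) ^ 2 := by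
      rw [hastar, hM, hL]
      rcases le_total (z * (pmax - p)) 0 with hy | hy
      · rw [max_eq_left hy, min_eq_right (by norm_num : (0:ℝ) ≤ 1)]
        nlinarith [mul_nonneg h0 h0,
          mul_nonneg h0 (mul_nonneg hs.le (neg_nonneg.mpr hy))]
      · rcases le_total 1 (z * (pmax - p)) with h1 | h1
        · rw [max_eq_right hy, min_eq_left h1]
          nlinarith [mul_nonneg (sub_nonneg.mpr hs')
            (by nlinarith : (0:ℝ) ≤ 2 * (s * (z * (pmax - p))) - s - a p)]
        · rw [max_eq_right hy, min_eq_right h1]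
          nlinarith [sq_nonneg (a p - s * (z * (pmax - p)))]
    calc h p = ((astar p - d) ^ 2 + (M + L * p) * (astar p - a p)) * f p := by
          rw [hh]; ring
      _ ≤ (a p - d) ^ 2 * f p := mul_le_mul_of_nonneg_right hb (hf_nonneg p)
  have hmono : (∫ p in Set.Ici (0 : ℝ), h p) ≤ ∫ p in Set.Ici (0 : ℝ), (a p - d) ^ 2 * f p :=
    setIntegral_mono_on hInt ha_obj_int measurableSet_Ici hpt
  have hcalc : (∫ p in Set.Ici (0 : ℝ), h p) =
      (∫ p in Set.Ici (0 : ℝ), (astar p - d) ^ 2 * f p) +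
        (M * (d - d) + L * (t * d - ∫ p in Set.Ici (0 : ℝ), p * a p * f p)) := by
    rw [hh]
    rw [integral_add hastar_obj_int hInt2, integral_add hIM hIL,
      integral_const_mul, integral_const_mul,
      integral_sub hastar_int ha_int, integral_sub hastar_spend_int ha_spend_int,
      hastar_dem, ha_dem, hastar_spend]
  have hpos : 0 ≤ L * (t * d - ∫ p in Set.Ici (0 : ℝ), p * a p * f p) :=
    mul_nonneg hL0 (sub_nonneg.mpr ha_spend)
  rw [hcalc] at hmono
  linarith
end

section
/- Let f : [0,∞) → [0,∞) be a probability density on [0,∞), let s > 0, d > 0, t > 0, A > 0, and β ≥ 0. Define a*(p) = min(s, A·exp(−β·p)) for p ≥ 0, and assume ∫ a*(p) f(p) dp = d and ∫ p·a*(p) f(p) dp = t·d. Then for every measurable a : [0,∞) → [0,s] with ∫ a(p) f(p) dp = d and ∫ p·a(p) f(p) dp ≤ t·d, taking x·log(x/d) extended by 0 at x = 0, one has ∫ (a(p)/s)·log(a(p)/d) f(p) dp ≥ ∫ (a*(p)/s)·log(a*(p)/d) f(p) dp (assuming all displayed integrals are finite). -/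
open MeasureTheory

/-- Convexity: for `y > 0`, `0 ≤ x`, the tangent inequality for `x ↦ x log(x/d)`. -/
lemma kl_tangent (d x y : ℝ) (hd : 0 < d) (hx : 0 ≤ x) (hy : 0 < y) :
    (Real.log (y / d) + 1) * (x - y) ≤ x * Real.log (x / d) - y * Real.log (y / d) := by
  rcases eq_or_lt_of_le hx with h0 | hx
  · simp only [← h0, zero_mul, zero_sub, zero_div]
    nlinarith [hy]
  · have hlog : Real.log (y / x) ≤ y / x - 1 := Real.log_le_sub_one_of_pos (by positivity)
    have h1 : x * Real.log (y / x) ≤ y - x := by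
      have := mul_le_mul_of_nonneg_left hlog (le_of_lt hx)
      calc x * Real.log (y / x) ≤ x * (y / x - 1) := this
        _ = y - x := by field_simp
    have h2 : Real.log (y / x) = Real.log (y / d) - Real.log (x / d) := by
      rw [Real.log_div (ne_of_gt hy) (ne_of_gt hx), Real.log_div (ne_of_gt hy) (ne_of_gt hd),
        Real.log_div (ne_of_gt hx) (ne_of_gt hd)]
      ring
    nlinarith [h1, h2]

lemma kl_pointwise (s d A β p x : ℝ) (hs : 0 < s) (hd : 0 < d) (hA : 0 < A)
    (hβ : 0 ≤ β) (hx : 0 ≤ x) (hxs : x ≤ s) :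
    (Real.log (A / d) + 1 - β * p) * (x - min s (A * Real.exp (-β * p))) ≤
      x * Real.log (x / d) -
        min s (A * Real.exp (-β * p)) * Real.log (min s (A * Real.exp (-β * p)) / d) := by
  set y := min s (A * Real.exp (-β * p)) with hy
  have hy0 : 0 < y := lt_min hs (by positivity)
  have base := kl_tangent d x y hd hx hy0
  have step2 : (Real.log (A / d) + 1 - β * p) * (x - y) ≤ (Real.log (y / d) + 1) * (x - y) := by
    rcases le_total (A * Real.exp (-β * p)) s with h | h
    · have : y = A * Real.exp (-β * p) := min_eq_right h
      rw [this]
      have hl : Real.log (A * Real.exp (-β * p) / d) = Real.log (A / d) - β * p := by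
        rw [Real.log_div (by positivity) (ne_of_gt hd),
          Real.log_mul (ne_of_gt hA) (Real.exp_ne_zero _), Real.log_exp,
          Real.log_div (ne_of_gt hA) (ne_of_gt hd)]
        ring
      rw [hl]
      exact le_of_eq (by ring)
    · have hys : y = s := min_eq_left h
      have hls : Real.log s ≤ Real.log A + (-β * p) := by
        calc Real.log s ≤ Real.log (A * Real.exp (-β * p)) :=
              Real.log_le_log hs h
          _ = Real.log A + (-β * p) := by
              rw [Real.log_mul (ne_of_gt hA) (Real.exp_ne_zero _), Real.log_exp]
      have hcoef : Real.log (y / d) + 1 ≤ Real.log (A / d) + 1 - β * p := by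
        rw [hys, Real.log_div (ne_of_gt hs) (ne_of_gt hd)]
        rw [Real.log_div (ne_of_gt hA) (ne_of_gt hd)]
        linarith
      have hneg : x - y ≤ 0 := by rw [hys]; linarith
      exact mul_le_mul_of_nonpos_right hcoef hneg
  linarith

/-- Optimality of the clamped-exponential allocation
`a*(p) = min(s, A·exp(−β·p))` for the maximally representative allocation
problem with Kullback–Leibler distance, when the demand and spend constraints
hold with equality for `a*`.  (The integrand `x·log(x/d)` is extended by `0` at
`x = 0`, which is the value of the displayed formula since `Real.log 0 = 0`.) -/
theorem kl_optimal_allocation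
    (f : ℝ → ℝ) (hf_nonneg : ∀ p, 0 ≤ f p) (hf_meas : Measurable f)
    (hf_prob : ∫ p in Set.Ici (0 : ℝ), f p = 1)
    (s d t A β : ℝ) (hs : 0 < s) (hd : 0 < d) (ht : 0 < t)
    (hA : 0 < A) (hβ : 0 ≤ β)
    (astar : ℝ → ℝ)
    (hastar : ∀ p, astar p = min s (A * Real.exp (-β * p)))
    (hastar_dem : ∫ p in Set.Ici (0 : ℝ), astar p * f p = d)
    (hastar_spend : ∫ p in Set.Ici (0 : ℝ), p * astar p * f p = t * d)
    (hastar_obj_int :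
      IntegrableOn (fun p => (astar p / s) * Real.log (astar p / d) * f p) (Set.Ici 0))
    (hastar_int : IntegrableOn (fun p => astar p * f p) (Set.Ici 0))
    (hastar_spend_int : IntegrableOn (fun p => p * astar p * f p) (Set.Ici 0)) :
    ∀ a : ℝ → ℝ, Measurable a → (∀ p, 0 ≤ p → a p ∈ Set.Icc 0 s) →
      (∫ p in Set.Ici (0 : ℝ), a p * f p = d) →
      (∫ p in Set.Ici (0 : ℝ), p * a p * f p ≤ t * d) →
      IntegrableOn (fun p => a p * f p) (Set.Ici 0) →
      IntegrableOn (fun p => p * a p * f p) (Set.Ici 0) →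
      IntegrableOn (fun p => (a p / s) * Real.log (a p / d) * f p) (Set.Ici 0) →
      (∫ p in Set.Ici (0 : ℝ), (astar p / s) * Real.log (astar p / d) * f p) ≤
        ∫ p in Set.Ici (0 : ℝ), (a p / s) * Real.log (a p / d) * f p := by
  intro a ha_meas ha_mem hdem hspend hint hspint hobjint
  set L : ℝ := Real.log (A / d) + 1 with hL
  -- the linearized lower-bound function
  set G : ℝ → ℝ := fun p =>
    L / s * (a p * f p) - L / s * (astar p * f p)
      - β / s * (p * a p * f p) + β / s * (p * astar p * f p) with hG
  have hGint : IntegrableOn G (Set.Ici 0) := by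
    exact (((hint.const_mul (L / s)).sub (hastar_int.const_mul (L / s))).sub
      (hspint.const_mul (β / s))).add (hastar_spend_int.const_mul (β / s))
  -- pointwise inequality
  have hpt : ∀ p ∈ Set.Ici (0 : ℝ),
      G p ≤ (a p / s) * Real.log (a p / d) * f p
        - (astar p / s) * Real.log (astar p / d) * f p := by
    intro p hp
    have hmem := ha_mem p hp
    have key := kl_pointwise s d A β p (a p) hs hd hA hβ hmem.1 hmem.2
    rw [← hastar p] at key
    have hfs : 0 ≤ f p / s := div_nonneg (hf_nonneg p) hs.le
    have := mul_le_mul_of_nonneg_right key hfs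
    have hs' : s ≠ 0 := ne_of_gt hs
    calc G p = (L - β * p) * (a p - astar p) * (f p / s) := by
          simp only [hG, hL]; field_simp; ring
      _ ≤ (a p * Real.log (a p / d) - astar p * Real.log (astar p / d)) * (f p / s) := by
          simpa [hL, mul_comm, mul_left_comm, mul_assoc] using this
      _ = (a p / s) * Real.log (a p / d) * f p
            - (astar p / s) * Real.log (astar p / d) * f p := by
          field_simp
  -- integral of G is nonnegative
  have hGval : ∫ p in Set.Ici (0 : ℝ), G p =
      β / s * (t * d) - β / s * ∫ p in Set.Ici (0 : ℝ), p * a p * f p := by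
    have h1a : IntegrableOn (fun p => L / s * (a p * f p)) (Set.Ici 0) :=
      hint.const_mul _
    have h1b : IntegrableOn (fun p => L / s * (astar p * f p)) (Set.Ici 0) :=
      hastar_int.const_mul _
    have h2 : IntegrableOn (fun p => p * a p * f p * (β / s)) (Set.Ici 0) :=
      hspint.mul_const _
    have h3 : IntegrableOn (fun p => p * astar p * f p * (β / s)) (Set.Ici 0) :=
      hastar_spend_int.mul_const _
    have h12 : IntegrableOn (fun p => L / s * (a p * f p) - L / s * (astar p * f p))
        (Set.Ici 0) := h1a.sub h1b
    have h123 : IntegrableOn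
        (fun p => L / s * (a p * f p) - L / s * (astar p * f p) - β / s * (p * a p * f p))
        (Set.Ici 0) := by
      exact (h12.sub h2).congr
        (Filter.Eventually.of_forall fun p => by simp [Pi.sub_apply]; ring)
    simp only [hG]
    calc (∫ p in Set.Ici (0 : ℝ), (L / s * (a p * f p) - L / s * (astar p * f p)
            - β / s * (p * a p * f p) + β / s * (p * astar p * f p)))
        = (∫ p in Set.Ici (0 : ℝ), (L / s * (a p * f p) - L / s * (astar p * f p)
            - β / s * (p * a p * f p))) + ∫ p in Set.Ici (0 : ℝ), p * astar p * f p * (β / s) := by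
          rw [← integral_add h123 h3]
          exact setIntegral_congr_fun measurableSet_Ici (fun p _ => by ring)
      _ = ((∫ p in Set.Ici (0 : ℝ), (L / s * (a p * f p) - L / s * (astar p * f p)))
            - ∫ p in Set.Ici (0 : ℝ), p * a p * f p * (β / s))
            + ∫ p in Set.Ici (0 : ℝ), p * astar p * f p * (β / s) := by
          rw [← integral_sub h12 h2]
          congr 1
          exact setIntegral_congr_fun measurableSet_Ici (fun p _ => by ring)
      _ = β / s * (t * d) - β / s * ∫ p in Set.Ici (0 : ℝ), p * a p * f p := by
          rw [integral_sub h1a h1b, integral_const_mul, integral_const_mul,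
            integral_mul_const, integral_mul_const, hdem, hastar_dem, hastar_spend]
          ring
  have hGnn : 0 ≤ ∫ p in Set.Ici (0 : ℝ), G p := by
    rw [hGval]
    have : β / s * (∫ p in Set.Ici (0 : ℝ), p * a p * f p) ≤ β / s * (t * d) :=
      mul_le_mul_of_nonneg_left hspend (by positivity)
    linarith
  -- compare integrals
  have hmono : ∫ p in Set.Ici (0 : ℝ), G p ≤
      ∫ p in Set.Ici (0 : ℝ), ((a p / s) * Real.log (a p / d) * f p
        - (astar p / s) * Real.log (astar p / d) * f p) :=
    setIntegral_mono_on hGint (hobjint.sub hastar_obj_int) measurableSet_Ici hpt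
  rw [integral_sub hobjint hastar_obj_int] at hmono
  linarith
end

section
/- Let z > 0 and p_max > 0. Set c = min(z·p_max, 1) and ℓ = max(p_max − 1/z, 0), and let μ = c · Uniform([ℓ, p_max]) be the uniform probability measure on the interval [ℓ, p_max] scaled by c (a sub-probability measure of total mass c). Then for every p ≥ 0, μ((p, ∞)) = min(1, max(0, z·(p_max − p))). -/
/-!
The uniform distribution on `[ℓ, p_max]` has the linear survival function
`min 1 ((p_max - p) / (p_max - ℓ))`. The choice of `ℓ` makes the mass `c` equal to
`z (p_max - ℓ)`, so scaling by `c` turns the slope into `z` and the cap into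
`c = min (z p_max) 1`; since `z (p_max - p) ≤ z p_max` for `p ≥ 0`, this cap acts as `1`.
-/

open MeasureTheory ProbabilityTheory Set

theorem Real.volume_Icc_inter_Ioi (a b p : ℝ) :
    volume (Icc a b ∩ Ioi p) = ENNReal.ofReal (b - max a p) := by
  rcases lt_or_ge p a with hpa | hap
  · have : Icc a b ⊆ Ioi p := fun x hx => hpa.trans_le hx.1
    rw [inter_eq_left.2 this, max_eq_left hpa.le, Real.volume_Icc]
  · have : Icc a b ∩ Ioi p = Ioc p b := by
      ext x
      simp only [mem_inter_iff, mem_Icc, mem_Ioi, mem_Ioc]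
      constructor
      · rintro ⟨⟨-, hxb⟩, hpx⟩
        exact ⟨hpx, hxb⟩
      · rintro ⟨hpx, hxb⟩
        exact ⟨⟨hap.trans hpx.le, hxb⟩, hpx⟩
    rw [this, max_eq_right hap, Real.volume_Ioc]

theorem Real.volume_cond_Icc_Ioi {a b : ℝ} (hab : a < b) (p : ℝ) :
    volume[Ioi p | Icc a b] = ENNReal.ofReal (min 1 ((b - p) / (b - a))) := by
  have hba : 0 < b - a := sub_pos.2 hab
  rw [cond_apply measurableSet_Icc, Real.volume_Icc, Real.volume_Icc_inter_Ioi,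
    ← ENNReal.ofReal_inv_of_pos hba, ← ENNReal.ofReal_mul (inv_nonneg.2 hba.le),
    ← min_sub_sub_left, mul_min_of_nonneg _ _ (inv_nonneg.2 hba.le), inv_mul_cancel₀ hba.ne',
    inv_mul_eq_div]

theorem min_mul_one_eq_mul_sub_max {z pmax : ℝ} (hz : 0 < z) :
    min (z * pmax) 1 = z * (pmax - max (pmax - 1 / z) 0) := by
  rw [← min_sub_sub_left, sub_sub_cancel, sub_zero, mul_min_of_nonneg _ _ hz.le,
    mul_one_div_cancel hz.ne', min_comm]

/-- The randomized bidding strategy that with probability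
`c = min(z·p_max, 1)` bids uniformly on `[ℓ, p_max]`, where
`ℓ = max(p_max − 1/z, 0)`, i.e. the sub-probability measure
`μ = c · Uniform([ℓ, p_max])`, has survival function
`μ((p,∞)) = min(1, max(0, z(p_max − p)))` for every `p ≥ 0`. -/
theorem scaled_uniform_survival_eq_l2_allocation
    (z pmax : ℝ) (hz : 0 < z) (hpmax : 0 < pmax)
    (c ℓ : ℝ) (hc : c = min (z * pmax) 1) (hℓ : ℓ = max (pmax - 1 / z) 0)
    (μ : Measure ℝ)
    (hμ : μ = ENNReal.ofReal c •
      ((volume (Set.Icc ℓ pmax))⁻¹ • volume.restrict (Set.Icc ℓ pmax))) :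
    ∀ p, 0 ≤ p → μ (Set.Ioi p) = ENNReal.ofReal (min 1 (max 0 (z * (pmax - p)))) := by
  intro p hp
  have hℓpmax : ℓ < pmax := hℓ ▸ max_lt (by linarith [one_div_pos.2 hz]) hpmax
  have hwidth : c = z * (pmax - ℓ) := hℓ ▸ hc.trans (min_mul_one_eq_mul_sub_max hz)
  have hc0 : 0 ≤ c := hwidth ▸ mul_nonneg hz.le (sub_pos.2 hℓpmax).le
  have hslope : c * ((pmax - p) / (pmax - ℓ)) = z * (pmax - p) := by
    rw [hwidth]; field_simp [(sub_pos.2 hℓpmax).ne']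
  have hcap : min c (z * (pmax - p)) = min 1 (z * (pmax - p)) := by
    rw [hc, min_right_comm, min_eq_right (by nlinarith : z * (pmax - p) ≤ z * pmax), min_comm]
  change μ = ENNReal.ofReal c • volume[|Icc ℓ pmax] at hμ
  rw [hμ, Measure.smul_apply, Real.volume_cond_Icc_Ioi hℓpmax, smul_eq_mul,
    ← ENNReal.ofReal_mul hc0, mul_min_of_nonneg _ _ hc0, mul_one, hslope, hcap]
  simp only [ENNReal.ofReal_min, ENNReal.ofReal_max, ENNReal.ofReal_zero, zero_max]
end

section
/- Let f : [0,∞) → [0,∞) be a probability density on [0,∞) with cumulative distribution function F(p) = ∫_0^p f(q) dq, let s > 0 and 0 < d ≤ s, and let p* ≥ 0 satisfy s·F(p*) = d. Then for every measurable a : [0,∞) → [0,s] with ∫ a(p) f(p) dp = d, one has ∫ p·a(p) f(p) dp ≥ ∫_0^{p*} s·p·f(p) dp, i.e., the allocation a₀(p) = s·𝟙[p ≤ p*] minimizes the total spend among all allocations meeting the demand d. -/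
open MeasureTheory intervalIntegral

/-- The flat-bid allocation `a₀(p) = s·𝟙[p ≤ p*]`, where `p*`
satisfies `s·F(p*) = d`, minimizes the total spend `∫ p·a(p) f(p) dp` among all
measurable allocations `a : [0,∞) → [0,s]` meeting the demand
`∫ a(p) f(p) dp = d`. -/
theorem flat_bid_minimizes_spend
    (f : ℝ → ℝ) (hf_nonneg : ∀ p, 0 ≤ f p) (hf_meas : Measurable f)
    (hf_int : IntegrableOn f (Set.Ici 0))
    (hf_prob : ∫ p in Set.Ici (0 : ℝ), f p = 1)
    (s d : ℝ) (hs : 0 < s) (hd : 0 < d) (hds : d ≤ s)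
    (pstar : ℝ) (hpstar : 0 ≤ pstar)
    (hF : s * ∫ q in (0 : ℝ)..pstar, f q = d) :
    ∀ a : ℝ → ℝ, Measurable a → (∀ p, 0 ≤ p → a p ∈ Set.Icc 0 s) →
      (∫ p in Set.Ici (0 : ℝ), a p * f p = d) →
      IntegrableOn (fun p => a p * f p) (Set.Ici 0) →
      IntegrableOn (fun p => p * a p * f p) (Set.Ici 0) →
      (∫ p in (0 : ℝ)..pstar, s * p * f p) ≤ ∫ p in Set.Ici (0 : ℝ), p * a p * f p := by
  intro a ha_meas ha_range ha_demand ha_int ha_int'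
  set a0 : ℝ → ℝ := fun p => Set.indicator (Set.Icc 0 pstar) (fun _ => s) p with ha0def
  have hIccIci : Set.Icc (0:ℝ) pstar ⊆ Set.Ici 0 := Set.Icc_subset_Ici_self
  have hfI : IntegrableOn f (Set.Icc 0 pstar) := hf_int.mono_set hIccIci
  -- a0 * f as an indicator
  have heq1 : (fun p => a0 p * f p) = Set.indicator (Set.Icc 0 pstar) (fun p => s * f p) := by
    funext p
    by_cases h : p ∈ Set.Icc 0 pstar
    · simp [a0, Set.indicator_of_mem h]
    · simp [a0, Set.indicator_of_notMem h]
  have heq2 : (fun p => p * a0 p * f p)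
      = Set.indicator (Set.Icc 0 pstar) (fun p => p * s * f p) := by
    funext p
    by_cases h : p ∈ Set.Icc 0 pstar
    · simp [a0, Set.indicator_of_mem h]
    · simp [a0, Set.indicator_of_notMem h]
  have h1 : IntegrableOn (fun p => a0 p * f p) (Set.Ici 0) := by
    rw [heq1]
    exact (MeasureTheory.IntegrableOn.integrable_indicator (hfI.const_mul s)
      measurableSet_Icc).integrableOn
  have h2 : IntegrableOn (fun p => p * a0 p * f p) (Set.Ici 0) := by
    rw [heq2]
    refine (MeasureTheory.IntegrableOn.integrable_indicator ?_ measurableSet_Icc).integrableOn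
    have hb : ∀ᵐ p ∂(volume.restrict (Set.Icc (0:ℝ) pstar)), ‖p * s‖ ≤ pstar * s := by
      refine (ae_restrict_iff' measurableSet_Icc).2 (ae_of_all _ fun p hp => ?_)
      rw [Real.norm_eq_abs, abs_mul, abs_of_nonneg hp.1, abs_of_nonneg hs.le]
      exact mul_le_mul_of_nonneg_right hp.2 hs.le
    have := hfI.bdd_mul (c := pstar * s)
      ((measurable_id.mul_const s).aestronglyMeasurable) hb
    exact this.congr (ae_of_all _ fun p => by simp only [id_eq])
  -- compute the demand and spend of a0
  have hIoc : ∀ g : ℝ → ℝ, ∫ p in Set.Icc (0:ℝ) pstar, g p = ∫ p in (0:ℝ)..pstar, g p := by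
    intro g
    rw [intervalIntegral.integral_of_le hpstar, ← integral_Icc_eq_integral_Ioc]
  have hA0 : ∫ p in Set.Ici (0:ℝ), a0 p * f p = d := by
    rw [heq1, setIntegral_indicator measurableSet_Icc,
      Set.inter_eq_self_of_subset_right hIccIci, hIoc, ← hF,
      ← intervalIntegral.integral_const_mul]
  have hA0' : ∫ p in Set.Ici (0:ℝ), p * a0 p * f p = ∫ p in (0:ℝ)..pstar, s * p * f p := by
    rw [heq2, setIntegral_indicator measurableSet_Icc,
      Set.inter_eq_self_of_subset_right hIccIci, hIoc]
    exact intervalIntegral.integral_congr fun p _ => by ring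
  -- pointwise nonnegativity of the key integrand
  have hkey : 0 ≤ ∫ p in Set.Ici (0:ℝ), (p - pstar) * (a p - a0 p) * f p := by
    refine setIntegral_nonneg measurableSet_Ici fun p hp => ?_
    have hp0 : (0:ℝ) ≤ p := hp
    rcases le_or_gt p pstar with h | h
    · have ha0p : a0 p = s := Set.indicator_of_mem (Set.mem_Icc.mpr ⟨hp0, h⟩) _
      have has : a p ≤ s := (ha_range p hp0).2
      have hrw : (p - pstar) * (a p - a0 p) = (pstar - p) * (a0 p - a p) := by ring
      rw [hrw]
      exact mul_nonneg (mul_nonneg (by linarith) (by rw [ha0p]; linarith)) (hf_nonneg p)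
    · have ha0p : a0 p = 0 := Set.indicator_of_notMem
        (fun hm => absurd (Set.mem_Icc.mp hm).2 h.not_ge) _
      have h1' : 0 ≤ a p - a0 p := by rw [ha0p]; simpa using (ha_range p hp0).1
      exact mul_nonneg (mul_nonneg (by linarith) h1') (hf_nonneg p)
  -- expand the key integral by linearity
  have hX : Integrable (fun p => p * a p * f p - pstar * (a p * f p))
      (volume.restrict (Set.Ici 0)) := ha_int'.sub (ha_int.const_mul pstar)
  have hY : Integrable (fun p => p * a0 p * f p - pstar * (a0 p * f p))
      (volume.restrict (Set.Ici 0)) := h2.sub (h1.const_mul pstar)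
  have hco : ∀ p, (p - pstar) * (a p - a0 p) * f p
      = (p * a p * f p - pstar * (a p * f p))
        - (p * a0 p * f p - pstar * (a0 p * f p)) := fun p => by ring
  have e0 : ∫ p in Set.Ici (0:ℝ), (p - pstar) * (a p - a0 p) * f p
      = ∫ p in Set.Ici (0:ℝ), ((p * a p * f p - pstar * (a p * f p))
        - (p * a0 p * f p - pstar * (a0 p * f p))) := by
    exact setIntegral_congr_fun measurableSet_Ici fun p _ => hco p
  have e1 : ∫ p in Set.Ici (0:ℝ), ((p * a p * f p - pstar * (a p * f p))
        - (p * a0 p * f p - pstar * (a0 p * f p)))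
      = (∫ p in Set.Ici (0:ℝ), (p * a p * f p - pstar * (a p * f p)))
        - ∫ p in Set.Ici (0:ℝ), (p * a0 p * f p - pstar * (a0 p * f p)) :=
    integral_sub hX hY
  have e2 : ∫ p in Set.Ici (0:ℝ), (p * a p * f p - pstar * (a p * f p))
      = (∫ p in Set.Ici (0:ℝ), p * a p * f p) - pstar * d := by
    rw [integral_sub ha_int' (ha_int.const_mul pstar), MeasureTheory.integral_const_mul, ha_demand]
  have e3 : ∫ p in Set.Ici (0:ℝ), (p * a0 p * f p - pstar * (a0 p * f p))
      = (∫ p in (0:ℝ)..pstar, s * p * f p) - pstar * d := by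
    rw [integral_sub h2 (h1.const_mul pstar), MeasureTheory.integral_const_mul, hA0, hA0']
  rw [e0, e1, e2, e3] at hkey
  linarith
end

section
/- Let f : [0,∞) → [0,∞) be a probability density on [0,∞). For q > 0 with ∫_0^q (q − p) f(p) dp > 0, define T(q) = (∫_0^q p·(q − p) f(p) dp) / (∫_0^q (q − p) f(p) dp). Then T is monotone non-decreasing: for all 0 < q₁ ≤ q₂ (with both denominators positive), T(q₁) ≤ T(q₂). -/
open MeasureTheory intervalIntegral

set_option maxHeartbeats 1000000 in
/-- The average price under the weight `(q − p)·f(p)` on `[0,q]`,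
`T(q) = (∫_0^q p(q−p) f(p) dp) / (∫_0^q (q−p) f(p) dp)`, is monotone
non-decreasing in `q` (wherever the denominator is positive), so the equation
`T(p_max) = t` from the L₂ case can be solved by binary search. -/
theorem l2_target_spend_ratio_monotone
    (f : ℝ → ℝ) (hf_nonneg : ∀ p, 0 ≤ f p) (hf_meas : Measurable f)
    (hf_int : IntegrableOn f (Set.Ici 0))
    (hf_prob : ∫ p in Set.Ici (0 : ℝ), f p = 1) :
    ∀ q₁ q₂ : ℝ, 0 < q₁ → q₁ ≤ q₂ →
      (0 < ∫ p in (0 : ℝ)..q₁, (q₁ - p) * f p) →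
      (0 < ∫ p in (0 : ℝ)..q₂, (q₂ - p) * f p) →
      (∫ p in (0 : ℝ)..q₁, p * (q₁ - p) * f p) / (∫ p in (0 : ℝ)..q₁, (q₁ - p) * f p) ≤
        (∫ p in (0 : ℝ)..q₂, p * (q₂ - p) * f p) / (∫ p in (0 : ℝ)..q₂, (q₂ - p) * f p) := by
  intro q₁ q₂ hq₁ hq12 hB₁ hB₂
  have hq₂ : (0:ℝ) < q₂ := lt_of_lt_of_le hq₁ hq12
  have hfc : IntegrableOn f (Set.Icc 0 q₂) := hf_int.mono_set Set.Icc_subset_Ici_self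
  have key : ∀ g : ℝ → ℝ, Continuous g → ∀ a b : ℝ, 0 ≤ a → b ≤ q₂ → a ≤ b →
      IntervalIntegrable (fun p => g p * f p) volume a b := by
    intro g hg a b ha hb hab
    rw [intervalIntegrable_iff]
    refine (IntegrableOn.continuousOn_mul hg.continuousOn hfc isCompact_Icc).mono_set ?_
    rw [Set.uIoc_of_le hab]
    exact Set.Ioc_subset_Icc_self.trans (Set.Icc_subset_Icc ha hb)
  -- general linearity lemma
  have lin : ∀ (c d : ℝ) (g₁ g₂ : ℝ → ℝ), Continuous g₁ → Continuous g₂ →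
      ∀ a b : ℝ, 0 ≤ a → b ≤ q₂ → a ≤ b →
      (∫ p in a..b, (c * g₁ p + d * g₂ p) * f p) =
        c * (∫ p in a..b, g₁ p * f p) + d * (∫ p in a..b, g₂ p * f p) := by
    intro c d g₁ g₂ h₁ h₂ a b ha hb hab
    simp_rw [add_mul, mul_assoc]
    rw [intervalIntegral.integral_add ((key g₁ h₁ a b ha hb hab).const_mul c)
      ((key g₂ h₂ a b ha hb hab).const_mul d),
      intervalIntegral.integral_const_mul, intervalIntegral.integral_const_mul]
  set A₁ := ∫ p in (0:ℝ)..q₁, p * (q₁ - p) * f p with hA₁def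
  set B₁ := ∫ p in (0:ℝ)..q₁, (q₁ - p) * f p with hB₁def
  set A₂ := ∫ p in (0:ℝ)..q₂, p * (q₂ - p) * f p with hA₂def
  set B₂ := ∫ p in (0:ℝ)..q₂, (q₂ - p) * f p with hB₂def
  -- D = q₁ B₁ - A₁ = ∫ (q₁-p)² f ≥ 0
  have hD_eq : (∫ p in (0:ℝ)..q₁, (q₁ - p)^2 * f p) = q₁ * B₁ + (-1) * A₁ := by
    have h : ∀ p : ℝ, (q₁ - p)^2 * f p =
        (q₁ * (q₁ - p) + (-1) * (p * (q₁ - p))) * f p := fun p => by ring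
    simp_rw [h]
    rw [lin q₁ (-1) (fun p => q₁ - p) (fun p => p * (q₁ - p)) (by fun_prop) (by fun_prop)
      0 q₁ le_rfl hq12 hq₁.le]
  have hD_nonneg : 0 ≤ q₁ * B₁ - A₁ := by
    have h0 : 0 ≤ ∫ p in (0:ℝ)..q₁, (q₁ - p)^2 * f p :=
      intervalIntegral.integral_nonneg hq₁.le
        (fun u _ => mul_nonneg (sq_nonneg _) (hf_nonneg u))
    linarith [hD_eq ▸ h0]
  have hD_pos : 0 < q₁ * B₁ - A₁ := by
    rcases hD_nonneg.lt_or_eq with h | h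
    · exact h
    · exfalso
      have hzero : (∫ p in (0:ℝ)..q₁, (q₁ - p)^2 * f p) = 0 := by rw [hD_eq]; linarith
      have hint : IntervalIntegrable (fun p => (q₁ - p)^2 * f p) volume 0 q₁ :=
        key (fun p => (q₁ - p)^2) (by fun_prop) 0 q₁ le_rfl hq12 hq₁.le
      have hae := (intervalIntegral.integral_eq_zero_iff_of_le_of_nonneg_ae hq₁.le
        (Filter.Eventually.of_forall fun p => mul_nonneg (sq_nonneg _) (hf_nonneg p))
        hint).mp hzero
      have hae' : (fun p => (q₁ - p) * f p) =ᵐ[volume.restrict (Set.Ioc 0 q₁)] 0 := by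
        filter_upwards [hae] with p hp
        simp only [Pi.zero_apply] at hp ⊢
        rcases mul_eq_zero.mp hp with h' | h'
        · rw [pow_eq_zero_iff (by norm_num)] at h'
          rw [h', zero_mul]
        · rw [h', mul_zero]
      have : B₁ = 0 := by
        rw [hB₁def, intervalIntegral.integral_of_le hq₁.le]
        exact integral_eq_zero_of_ae hae'
      linarith
  -- C and F
  set C := ∫ p in (0:ℝ)..q₁, (p * B₁ - A₁) * f p with hCdef
  set F := ∫ p in (0:ℝ)..q₁, (p * (p * B₁ - A₁)) * f p with hFdef
  -- I1 computed two ways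
  have hI1a : (∫ p in (0:ℝ)..q₁, ((p * B₁ - A₁) * (q₁ - p)) * f p) = B₁ * A₁ + (-A₁) * B₁ := by
    have h : ∀ p : ℝ, ((p * B₁ - A₁) * (q₁ - p)) * f p =
        (B₁ * (p * (q₁ - p)) + (-A₁) * (q₁ - p)) * f p := fun p => by ring
    simp_rw [h]
    rw [lin B₁ (-A₁) (fun p => p * (q₁ - p)) (fun p => q₁ - p) (by fun_prop) (by fun_prop)
      0 q₁ le_rfl hq12 hq₁.le]
  have hI1b : (∫ p in (0:ℝ)..q₁, ((p * B₁ - A₁) * (q₁ - p)) * f p) = q₁ * C + (-1) * F := by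
    have h : ∀ p : ℝ, ((p * B₁ - A₁) * (q₁ - p)) * f p =
        (q₁ * (p * B₁ - A₁) + (-1) * (p * (p * B₁ - A₁))) * f p := fun p => by ring
    simp_rw [h]
    rw [lin q₁ (-1) (fun p => p * B₁ - A₁) (fun p => p * (p * B₁ - A₁)) (by fun_prop)
      (by fun_prop) 0 q₁ le_rfl hq12 hq₁.le]
  have hF : F = q₁ * C := by linarith [hI1a, hI1b]
  -- E = ∫ (pB₁ - A₁)² f = B₁ F - A₁ C ≥ 0
  have hE : (∫ p in (0:ℝ)..q₁, ((p * B₁ - A₁)^2) * f p) = B₁ * F + (-A₁) * C := by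
    have h : ∀ p : ℝ, ((p * B₁ - A₁)^2) * f p =
        (B₁ * (p * (p * B₁ - A₁)) + (-A₁) * (p * B₁ - A₁)) * f p := fun p => by ring
    simp_rw [h]
    rw [lin B₁ (-A₁) (fun p => p * (p * B₁ - A₁)) (fun p => p * B₁ - A₁) (by fun_prop)
      (by fun_prop) 0 q₁ le_rfl hq12 hq₁.le]
  have hE_nonneg : 0 ≤ ∫ p in (0:ℝ)..q₁, ((p * B₁ - A₁)^2) * f p :=
    intervalIntegral.integral_nonneg hq₁.le (fun u _ => mul_nonneg (sq_nonneg _) (hf_nonneg u))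
  have hC : 0 ≤ C := by
    have hDC : 0 ≤ (q₁ * B₁ - A₁) * C := by nlinarith [hE, hE_nonneg, hF]
    by_contra hneg
    push_neg at hneg
    nlinarith
  -- split the big integral
  have hP1 : (∫ p in (0:ℝ)..q₁, ((p * B₁ - A₁) * (q₂ - p)) * f p) =
      1 * (∫ p in (0:ℝ)..q₁, ((p * B₁ - A₁) * (q₁ - p)) * f p) + (q₂ - q₁) * C := by
    have h : ∀ p : ℝ, ((p * B₁ - A₁) * (q₂ - p)) * f p =
        (1 * ((p * B₁ - A₁) * (q₁ - p)) + (q₂ - q₁) * (p * B₁ - A₁)) * f p := fun p => by ring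
    simp_rw [h]
    rw [lin 1 (q₂ - q₁) (fun p => (p * B₁ - A₁) * (q₁ - p)) (fun p => p * B₁ - A₁)
      (by fun_prop) (by fun_prop) 0 q₁ le_rfl hq12 hq₁.le]
  have hP2 : 0 ≤ ∫ p in q₁..q₂, ((p * B₁ - A₁) * (q₂ - p)) * f p := by
    refine intervalIntegral.integral_nonneg hq12 (fun u hu => ?_)
    have h1 : 0 ≤ u * B₁ - A₁ := by nlinarith [hu.1, hu.2, hD_pos, hB₁]
    have h2 : 0 ≤ q₂ - u := by linarith [hu.2]
    exact mul_nonneg (mul_nonneg h1 h2) (hf_nonneg u)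
  have hTot : (∫ p in (0:ℝ)..q₂, ((p * B₁ - A₁) * (q₂ - p)) * f p) = B₁ * A₂ + (-A₁) * B₂ := by
    have h : ∀ p : ℝ, ((p * B₁ - A₁) * (q₂ - p)) * f p =
        (B₁ * (p * (q₂ - p)) + (-A₁) * (q₂ - p)) * f p := fun p => by ring
    simp_rw [h]
    rw [lin B₁ (-A₁) (fun p => p * (q₂ - p)) (fun p => q₂ - p) (by fun_prop) (by fun_prop)
      0 q₂ le_rfl le_rfl hq₂.le]
  have hSum : (∫ p in (0:ℝ)..q₁, ((p * B₁ - A₁) * (q₂ - p)) * f p) +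
      (∫ p in q₁..q₂, ((p * B₁ - A₁) * (q₂ - p)) * f p) =
      ∫ p in (0:ℝ)..q₂, ((p * B₁ - A₁) * (q₂ - p)) * f p :=
    intervalIntegral.integral_add_adjacent_intervals
      (key (fun p => (p * B₁ - A₁) * (q₂ - p)) (by fun_prop) 0 q₁ le_rfl hq12 hq₁.le)
      (key (fun p => (p * B₁ - A₁) * (q₂ - p)) (by fun_prop) q₁ q₂ hq₁.le le_rfl hq12)
  rw [div_le_div_iff₀ hB₁ hB₂]
  have hmul : 0 ≤ (q₂ - q₁) * C := mul_nonneg (by linarith) hC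
  have hI10 : (∫ p in (0:ℝ)..q₁, ((p * B₁ - A₁) * (q₁ - p)) * f p) = 0 := by
    rw [hI1a]; ring
  nlinarith [hP1, hP2, hTot, hSum, hmul, hI10]
end

section
/- Let s > 0, d > 0, λ₁ ∈ ℝ, λ₂ ≥ 0, and let a : [0,∞) → [0,s] satisfy, for every p ≥ 0: if 0 < a(p) < s then a(p)/s − d/s = λ₁ − λ₂ p; if a(p) = 0 then −d/s ≥ λ₁ − λ₂ p; and if a(p) = s then 1 − d/s ≤ λ₁ − λ₂ p. Then a(p) = min(s, max(0, d + s·(λ₁ − λ₂ p))) for all p ≥ 0; in particular, a is continuous on [0,∞). -/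
/-- Any allocation satisfying the Euler–Lagrange optimality
conditions for the L₂ distance measure (with multiplier `λ₂ ≥ 0` for the
target-spend constraint) is the clamped affine function
`a(p) = min(s, max(0, d + s(λ₁ − λ₂ p)))` of price; in particular it is
continuous on `[0,∞)`. -/
theorem l2_optimality_conditions_imply_clamped_affine
    (s d lam₁ lam₂ : ℝ) (hs : 0 < s) (hd : 0 < d) (hlam₂ : 0 ≤ lam₂)
    (a : ℝ → ℝ)
    (hbd : ∀ p, 0 ≤ p → a p ∈ Set.Icc 0 s)
    (hinterior : ∀ p, 0 ≤ p → 0 < a p → a p < s →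
      a p / s - d / s = lam₁ - lam₂ * p)
    (hlo : ∀ p, 0 ≤ p → a p = 0 → lam₁ - lam₂ * p ≤ -(d / s))
    (hhi : ∀ p, 0 ≤ p → a p = s → 1 - d / s ≤ lam₁ - lam₂ * p) :
    (∀ p, 0 ≤ p → a p = min s (max 0 (d + s * (lam₁ - lam₂ * p)))) ∧
    ContinuousOn a (Set.Ici 0) := by
  have key : ∀ p, 0 ≤ p → a p = min s (max 0 (d + s * (lam₁ - lam₂ * p))) := by
    intro p hp
    obtain ⟨h0, h1⟩ := hbd p hp
    rcases eq_or_lt_of_le h0 with hz | hpos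
    · have hz' : a p = 0 := hz.symm
      have := hlo p hp hz'
      have hle : d + s * (lam₁ - lam₂ * p) ≤ 0 := by
        have : s * (lam₁ - lam₂ * p) ≤ s * (-(d / s)) :=
          mul_le_mul_of_nonneg_left this hs.le
        have hsd : s * (-(d / s)) = -d := by field_simp
        linarith [this, hsd ▸ this]
      rw [hz', max_eq_left hle, min_eq_right hs.le]
    rcases eq_or_lt_of_le h1 with hsubeq | hlt
    · have := hhi p hp hsubeq
      have hge : s ≤ d + s * (lam₁ - lam₂ * p) := by
        have h2 : s * (1 - d / s) ≤ s * (lam₁ - lam₂ * p) :=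
          mul_le_mul_of_nonneg_left this hs.le
        have h3 : s * (1 - d / s) = s - d := by field_simp
        linarith
      rw [hsubeq, min_eq_left (le_trans hge (le_max_right _ _))]
    · have heq := hinterior p hp hpos hlt
      have hval : a p = d + s * (lam₁ - lam₂ * p) := by
        have : a p - d = s * (lam₁ - lam₂ * p) := by
          field_simp at heq
          linarith
        linarith
      rw [hval]
      rw [max_eq_right (by linarith [hval ▸ hpos] : (0:ℝ) ≤ d + s * (lam₁ - lam₂ * p)),
        min_eq_right (by linarith [hval ▸ hlt])]
  refine ⟨key, ?_⟩
  have hc : ContinuousOn (fun p => min s (max 0 (d + s * (lam₁ - lam₂ * p)))) (Set.Ici 0) :=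
    (continuous_const.min ((continuous_const.max (by continuity)))).continuousOn
  exact hc.congr fun p hp => key p hp
end
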